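/- arXiv:1405.0535 — 2 statements merged into one kernel-verified Lean document; each statement's English description precedes it below -/
import Mathlib

section
/- Let x ∈ ℝⁿ with x ≥ 0, z ∈ ℝᵐ, and K ≥ ‖f(x,z)‖_∞. Then (x,z) is a saddle point of L^K if and only if Ax = b and I_{σ(x,z)} f(x,z) = 0 (equivalently: f_i(x,z) = 0 whenever x_i > 0, and f_i(x,z) ≤ 0 whenever x_i = 0). -/
open Matrix BigOperators

noncomputable def LK {n m : ℕ} (A : Matrix (Fin m) (Fin n) ℝ) (b : Fin m → ℝ)
    (c : Fin n → ℝ) (K : ℝ) (x : Fin n → ℝ) (z : Fin m → ℝ) : ℝ :=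
  c ⬝ᵥ x + (1 / 2) * (x ⬝ᵥ x)
    + (1 / 2) * ((A *ᵥ x - b) ⬝ᵥ (A *ᵥ x - b))
    + z ⬝ᵥ (A *ᵥ x - b)
    + K * ∑ i, max 0 (-(x i))

noncomputable def fmap {n m : ℕ} (A : Matrix (Fin m) (Fin n) ℝ) (b : Fin m → ℝ)
    (c : Fin n → ℝ) (x : Fin n → ℝ) (z : Fin m → ℝ) : Fin n → ℝ :=
  -(Aᵀ *ᵥ z + c + x) - Aᵀ *ᵥ (A *ᵥ x - b)

def sgm {n m : ℕ} (A : Matrix (Fin m) (Fin n) ℝ) (b : Fin m → ℝ)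
    (c : Fin n → ℝ) (x : Fin n → ℝ) (z : Fin m → ℝ) : Set (Fin n) :=
  {i | 0 ≤ fmap A b c x z i ∨ 0 < x i}

open Classical in
noncomputable def ISet {ι : Type*} [Fintype ι] [DecidableEq ι] (S : Set ι) : Matrix ι ι ℝ :=
  Matrix.diagonal fun i => if i ∈ S then 1 else 0

def IsSaddle {n m : ℕ} (A : Matrix (Fin m) (Fin n) ℝ) (b : Fin m → ℝ)
    (c : Fin n → ℝ) (K : ℝ) (xb : Fin n → ℝ) (zb : Fin m → ℝ) : Prop :=
  ∀ x z, LK A b c K xb z ≤ LK A b c K xb zb ∧ LK A b c K xb zb ≤ LK A b c K x zb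

/-!
In `z` the Lagrangian is affine with slope `A x - b`, so `z` maximises it exactly when
`A x = b`. In `x`, `L^K(y,z)` is exactly `L^K(x,z) - f·(y - x)` plus a nonnegative quadratic
in `y - x` plus the penalty `K Σ max(0, -y_i)`, the penalty vanishing at `x ≥ 0`. Moving one
coordinate of `x` by a small `t` keeps `y ≥ 0` as long as `t ≥ -x_i`, and the first-order
term `-f_i t` must then be nonnegative: this gives `f_i ≤ 0`, and `f_i = 0` when `x_i > 0`.
Conversely, under these sign conditions each summand `-f_i (y_i - x_i) + K max(0, -y_i)` is
nonnegative, since `K ≥ |f_i|` lets the penalty absorb the linear term when `y_i < 0`.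
-/

open Filter Topology

theorem nonneg_of_forall_mul_add_mul_sq_nonneg {p q δ : ℝ} (hδ : 0 < δ)
    (h : ∀ t, 0 < t → t ≤ δ → 0 ≤ p * t + q * t ^ 2) : 0 ≤ p := by
  have hlim : Tendsto (fun t => p + q * t) (𝓝[>] 0) (𝓝 p) := by
    have hcont : Continuous fun t : ℝ => p + q * t := by fun_prop
    simpa using (hcont.tendsto 0).mono_left nhdsWithin_le_nhds
  refine ge_of_tendsto hlim ?_
  filter_upwards [Ioo_mem_nhdsGT hδ] with t ⟨ht, htδ⟩
  have hprod : 0 ≤ t * (p + q * t) := by linarith [h t ht htδ.le]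
  exact (mul_nonneg_iff_of_pos_left ht).mp hprod

theorem dotProduct_self_nonneg {ι R : Type*} [Fintype ι] [Ring R] [LinearOrder R]
    [IsStrictOrderedRing R] (v : ι → R) : 0 ≤ v ⬝ᵥ v :=
  Finset.sum_nonneg fun i _ => mul_self_nonneg (v i)

theorem sum_max_zero_neg_eq_zero {ι : Type*} [Fintype ι] {x : ι → ℝ} (hx : ∀ i, 0 ≤ x i) :
    ∑ i, max 0 (-(x i)) = 0 :=
  Finset.sum_eq_zero fun i _ => max_eq_left (neg_nonpos.mpr (hx i))

theorem ISet_mulVec_eq_zero_iff {ι : Type*} [Fintype ι] [DecidableEq ι] (S : Set ι)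
    (v : ι → ℝ) : ISet S *ᵥ v = 0 ↔ ∀ i ∈ S, v i = 0 := by
  simp only [ISet, mulVec_diagonal, funext_iff, Pi.zero_apply, mul_eq_zero, ite_eq_right_iff,
    one_ne_zero, imp_false, or_iff_not_imp_left, not_not]

theorem le_neg_mul_sub_add_mul_max {x y f K : ℝ} (hx : 0 ≤ x) (hK : |f| ≤ K) (hf : f ≤ 0)
    (hxf : 0 < x → f = 0) : 0 ≤ -f * (y - x) + K * max 0 (-y) := by
  rcases hx.lt_or_eq with hx | rfl
  · have hK0 : 0 ≤ K := (abs_nonneg f).trans hK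
    rw [hxf hx, neg_zero, zero_mul, zero_add]
    exact mul_nonneg hK0 (le_max_left _ _)
  · have hfK : -K ≤ f := (abs_le.mp hK).1
    rcases le_total 0 y with hy | hy
    · rw [max_eq_left (neg_nonpos.mpr hy)]
      nlinarith
    · rw [max_eq_right (neg_nonneg.mpr hy)]
      nlinarith

section Lagrangian

variable {n m : ℕ} (A : Matrix (Fin m) (Fin n) ℝ) (b : Fin m → ℝ) (c : Fin n → ℝ) (K : ℝ)

theorem LK_add_right (x : Fin n → ℝ) (z w : Fin m → ℝ) :
    LK A b c K x (z + w) = LK A b c K x z + w ⬝ᵥ (A *ᵥ x - b) := by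
  rw [LK, LK, add_dotProduct]
  ring

theorem LK_taylor (x y : Fin n → ℝ) (z : Fin m → ℝ) :
    LK A b c K y z = LK A b c K x z - fmap A b c x z ⬝ᵥ (y - x)
      + (1 / 2) * ((y - x) ⬝ᵥ (y - x)) + (1 / 2) * ((A *ᵥ (y - x)) ⬝ᵥ (A *ᵥ (y - x)))
      + K * (∑ i, max 0 (-(y i)) - ∑ i, max 0 (-(x i))) := by
  obtain ⟨d, rfl⟩ : ∃ d, y = x + d := ⟨y - x, by abel⟩
  have htr : ∀ (w : Fin m → ℝ) (v : Fin n → ℝ), (Aᵀ *ᵥ w) ⬝ᵥ v = w ⬝ᵥ (A *ᵥ v) := fun w v => by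
    rw [mulVec_transpose, ← dotProduct_mulVec]
  simp only [LK, fmap, add_sub_cancel_left, mulVec_add, add_dotProduct, dotProduct_add,
    sub_dotProduct, dotProduct_sub, neg_dotProduct, htr]
  rw [dotProduct_comm d x, dotProduct_comm (A *ᵥ d) (A *ᵥ x), dotProduct_comm (A *ᵥ d) b,
    dotProduct_comm (A *ᵥ x) b]
  ring

theorem LK_add_single {x : Fin n → ℝ} (hx : ∀ j, 0 ≤ x j) (z : Fin m → ℝ) {i : Fin n} {t : ℝ}
    (ht : 0 ≤ x i + t) :
    LK A b c K (x + Pi.single i t) z = LK A b c K x z - fmap A b c x z i * t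
      + (1 / 2) * (1 + A.col i ⬝ᵥ A.col i) * t ^ 2 := by
  have hxt : ∀ j, 0 ≤ (x + Pi.single i t : Fin n → ℝ) j := fun j => by
    rcases eq_or_ne j i with rfl | hj
    · simpa using ht
    · simpa [Pi.single_eq_of_ne hj] using hx j
  rw [LK_taylor A b c K x, add_sub_cancel_left, sum_max_zero_neg_eq_zero hxt,
    sum_max_zero_neg_eq_zero hx, dotProduct_single, single_dotProduct, Pi.single_eq_same,
    mulVec_single]
  simp only [op_smul_eq_smul, smul_dotProduct, dotProduct_smul, smul_eq_mul]
  ring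

theorem isSaddle_iff (x : Fin n → ℝ) (z : Fin m → ℝ) :
    IsSaddle A b c K x z ↔
      (∀ w, LK A b c K x w ≤ LK A b c K x z) ∧ ∀ y, LK A b c K x z ≤ LK A b c K y z :=
  ⟨fun h => ⟨fun w => (h x w).1, fun y => (h y z).2⟩, fun h y w => ⟨h.1 w, h.2 y⟩⟩

theorem forall_LK_le_iff_mulVec_eq (x : Fin n → ℝ) (z : Fin m → ℝ) :
    (∀ w, LK A b c K x w ≤ LK A b c K x z) ↔ A *ᵥ x = b := by
  constructor
  · intro h
    have hle := h (z + (A *ᵥ x - b))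
    rw [LK_add_right] at hle
    have hself : (A *ᵥ x - b) ⬝ᵥ (A *ᵥ x - b) = 0 :=
      le_antisymm (by linarith) (dotProduct_self_nonneg _)
    exact sub_eq_zero.mp (dotProduct_self_eq_zero.mp hself)
  · intro h w
    rw [← add_sub_cancel z w, LK_add_right, h, sub_self, dotProduct_zero, add_zero]

theorem fmap_nonpos_of_forall_LK_le_LK {x : Fin n → ℝ} (hx : ∀ j, 0 ≤ x j) {z : Fin m → ℝ}
    (hmin : ∀ y, LK A b c K x z ≤ LK A b c K y z) (i : Fin n) :
    fmap A b c x z i ≤ 0 ∧ (0 < x i → fmap A b c x z i = 0) := by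
  have hdir : ∀ t, 0 ≤ x i + t →
      0 ≤ -fmap A b c x z i * t + (1 / 2) * (1 + A.col i ⬝ᵥ A.col i) * t ^ 2 := fun t ht => by
    have := hmin (x + Pi.single i t)
    rw [LK_add_single A b c K hx z ht] at this
    linarith
  have hf : fmap A b c x z i ≤ 0 := by
    have := nonneg_of_forall_mul_add_mul_sq_nonneg one_pos fun t ht _ =>
      hdir t (by linarith [hx i])
    linarith
  refine ⟨hf, fun hxi => le_antisymm hf ?_⟩
  refine nonneg_of_forall_mul_add_mul_sq_nonneg (q := (1 / 2) * (1 + A.col i ⬝ᵥ A.col i)) hxi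
    fun s _ hs => ?_
  have := hdir (-s) (by linarith)
  rw [neg_sq] at this
  linarith

theorem forall_LK_le_LK_iff {x : Fin n → ℝ} (hx : ∀ j, 0 ≤ x j) (z : Fin m → ℝ)
    (hK : ‖fmap A b c x z‖ ≤ K) :
    (∀ y, LK A b c K x z ≤ LK A b c K y z) ↔
      ∀ i, fmap A b c x z i ≤ 0 ∧ (0 < x i → fmap A b c x z i = 0) := by
  refine ⟨fmap_nonpos_of_forall_LK_le_LK A b c K hx, fun h y => ?_⟩
  have hKi : ∀ i, |fmap A b c x z i| ≤ K := fun i => by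
    simpa using (norm_le_pi_norm (fmap A b c x z) i).trans hK
  have hlin : 0 ≤ -(fmap A b c x z ⬝ᵥ (y - x)) + K * ∑ i, max 0 (-(y i)) := by
    rw [dotProduct, Finset.mul_sum, ← Finset.sum_neg_distrib, ← Finset.sum_add_distrib]
    exact Finset.sum_nonneg fun i _ => by
      simpa [neg_mul] using le_neg_mul_sub_add_mul_max (hx i) (hKi i) (h i).1 (h i).2
  rw [LK_taylor A b c K x y z, sum_max_zero_neg_eq_zero hx, sub_zero]
  linarith [dotProduct_self_nonneg (y - x), dotProduct_self_nonneg (A *ᵥ (y - x))]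

theorem forall_mem_sgm_iff (x : Fin n → ℝ) (z : Fin m → ℝ) :
    (∀ i ∈ sgm A b c x z, fmap A b c x z i = 0) ↔
      ∀ i, fmap A b c x z i ≤ 0 ∧ (0 < x i → fmap A b c x z i = 0) := by
  refine forall_congr' fun i => ⟨fun h => ⟨?_, fun hx => h (Or.inr hx)⟩, ?_⟩
  · by_contra hpos
    exact hpos (h (Or.inl (not_le.mp hpos).le)).le
  · rintro ⟨hf, hxf⟩ (hf' | hx)
    exacts [le_antisymm hf hf', hxf hx]

end Lagrangian

/-- For x ≥ 0, z, and K ≥ ‖f(x,z)‖_∞, (x,z) is a saddle point of L^K if and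
only if Ax = b and I_{σ(x,z)} f(x,z) = 0. -/
theorem saddle_iff_equilibrium (n m : ℕ) (c : Fin n → ℝ) (b : Fin m → ℝ)
    (A : Matrix (Fin m) (Fin n) ℝ) (x : Fin n → ℝ) (z : Fin m → ℝ) (K : ℝ)
    (hx : ∀ i, 0 ≤ x i)
    (hK : ‖fmap A b c x z‖ ≤ K) :
    IsSaddle A b c K x z ↔
      (A *ᵥ x = b ∧ ISet (sgm A b c x z) *ᵥ fmap A b c x z = 0) := by
  rw [isSaddle_iff, forall_LK_le_iff_mulVec_eq, forall_LK_le_LK_iff A b c K hx z hK,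
    ISet_mulVec_eq_zero_iff, forall_mem_sgm_iff]
end

section
/- Assume ρ(AᵀA) ≤ 1. Let x̂ ∈ ℝⁿ with x̂ ≥ 0 and ẑ ∈ ℝᵐ, set p̂ = σ(x̂,ẑ), and suppose i ∈ {1,…,n} satisfies i ∉ p̂ (i.e., x̂_i = 0 and f_i(x̂,ẑ) < 0). Define the trajectory x(t) = x̂ + t·I_{p̂} f(x̂,ẑ) and z(t) = ẑ + t·(Ax̂ − b) for t ≥ 0, and let T > 0 satisfy f_i(x(T),z(T)) = 0. Then for every ν > 0 and every t ≥ T with t − T < ν/(2√2): f_i(x(t),z(t))² ≤ ν²·( f(x̂,ẑ)ᵀ I_{p̂ ∩ N_i^x} f(x̂,ẑ) + (Ax̂ − b)ᵀ I_{N_i^z} (Ax̂ − b) ). -/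
/-!
Along the sample-and-hold flow the i-th coordinate of x is frozen (i ∉ p̂), so t ↦ f_i(x(t), z(t))
is affine with slope −d, d = (Aᵀ(Ax̂ − b))_i + (AᵀA I_p̂ f̂)_i; its root at T turns it into (T − t)·d.
For the L2 operator norm, ρ(AᵀA) = ‖A‖² ≤ 1, so column i of A and row i of AᵀA have Euclidean norm
at most 1, and both vanish off N_i^z resp. N_i^x. Cauchy–Schwarz bounds the two terms of d by the
two quadratic forms, whence d² ≤ 2(…), and (t − T)² < ν²/8 finishes.
-/

open Matrix BigOperators

/-- x-neighbor set of agent i: N_i^x = {j : (AᵀA)_{ij} ≠ 0} ∪ {i}. -/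
def Nx {n m : ℕ} (A : Matrix (Fin m) (Fin n) ℝ) (i : Fin n) : Set (Fin n) :=
  {j | (Aᵀ * A) i j ≠ 0} ∪ {i}

/-- z-neighbor set of agent i: N_i^z = {ℓ : a_{ℓ,i} ≠ 0}. -/
def Nz {n m : ℕ} (A : Matrix (Fin m) (Fin n) ℝ) (i : Fin n) : Set (Fin m) :=
  {ℓ | A ℓ i ≠ 0}

open scoped Matrix.Norms.L2Operator

theorem Matrix.IsHermitian.spectralRadius_eq_l2_opNNNorm {𝕜 ι : Type*} [RCLike 𝕜] [Fintype ι]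
    [DecidableEq ι] {M : Matrix ι ι 𝕜} (hM : M.IsHermitian) :
    spectralRadius 𝕜 M = ‖M‖₊ := by
  rw [Matrix.cstar_nnnorm_def, ← ContinuousLinearMap.spectralRadius_eq_nnnorm _
    (hM.isSelfAdjoint.map Matrix.toEuclideanCLM), spectralRadius, spectralRadius,
    AlgEquiv.spectrum_eq]

theorem Matrix.spectralRadius_transpose_mul_self {ι κ : Type*} [Fintype ι] [Fintype κ]
    [DecidableEq κ] (A : Matrix ι κ ℝ) : spectralRadius ℝ (Aᵀ * A) = ‖A‖₊ ^ 2 := by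
  rw [← conjTranspose_eq_transpose_of_trivial,
    (isHermitian_conjTranspose_mul_self A).spectralRadius_eq_l2_opNNNorm,
    l2_opNNNorm_conjTranspose_mul_self, sq, ENNReal.coe_mul]

theorem Matrix.dotProduct_col_self_le_l2_opNorm_sq {ι κ : Type*} [Fintype ι] [Fintype κ]
    [DecidableEq κ] (B : Matrix ι κ ℝ) (j : κ) : B.col j ⬝ᵥ B.col j ≤ ‖B‖ ^ 2 := by
  have h := B.l2_opNorm_mulVec (EuclideanSpace.single j 1)
  rw [PiLp.norm_single, norm_one, mul_one, ← sq_le_sq₀ (norm_nonneg _) (norm_nonneg _),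
    EuclideanSpace.real_norm_sq_eq] at h
  simpa [dotProduct, sq] using h

theorem Matrix.l2_opNorm_le_one_of_spectralRadius_transpose_mul_self_le_one {ι κ : Type*}
    [Fintype ι] [Fintype κ] [DecidableEq κ] (A : Matrix ι κ ℝ)
    (h : spectralRadius ℝ (Aᵀ * A) ≤ 1) : ‖A‖ ≤ 1 := by
  have h' : ‖A‖₊ ^ 2 ≤ 1 := by
    exact_mod_cast A.spectralRadius_transpose_mul_self.symm.trans_le h
  exact pow_le_one_iff_of_nonneg (norm_nonneg A) two_ne_zero |>.mp h'

open Classical in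
theorem ISet_mulVec_apply {ι : Type*} [Fintype ι] [DecidableEq ι] (S : Set ι) (v : ι → ℝ)
    (j : ι) : (ISet S *ᵥ v) j = if j ∈ S then v j else 0 := by
  simp [ISet, mulVec_diagonal]

theorem ISet_mulVec_dotProduct_ISet_mulVec_ISet_mulVec {ι : Type*} [Fintype ι] [DecidableEq ι]
    (P S : Set ι) (v : ι → ℝ) :
    (ISet P *ᵥ v) ⬝ᵥ (ISet S *ᵥ (ISet P *ᵥ v)) = v ⬝ᵥ (ISet (P ∩ S) *ᵥ v) := by
  classical
  refine Finset.sum_congr rfl fun j _ => ?_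
  by_cases hP : j ∈ P <;> by_cases hS : j ∈ S <;> simp [ISet_mulVec_apply, hP, hS]

theorem sq_dotProduct_le_dotProduct_ISet_mulVec {ι : Type*} [Fintype ι] [DecidableEq ι]
    {S : Set ι} {r : ι → ℝ} (hr : ∀ j ∉ S, r j = 0) (hr1 : r ⬝ᵥ r ≤ 1) (v : ι → ℝ) :
    (r ⬝ᵥ v) ^ 2 ≤ v ⬝ᵥ (ISet S *ᵥ v) := by
  classical
  set w := ISet S *ᵥ v
  have hrw : r ⬝ᵥ v = r ⬝ᵥ w := by
    refine Finset.sum_congr rfl fun j _ => ?_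
    by_cases hj : j ∈ S <;> simp [w, ISet_mulVec_apply, hj, hr]
  have hww : w ⬝ᵥ w = v ⬝ᵥ w := by
    refine Finset.sum_congr rfl fun j _ => ?_
    by_cases hj : j ∈ S <;> simp [w, ISet_mulVec_apply, hj]
  have hcs : (r ⬝ᵥ w) ^ 2 ≤ (r ⬝ᵥ r) * (w ⬝ᵥ w) := by
    simpa only [dotProduct, sq] using Finset.sum_mul_sq_le_sq_mul_sq Finset.univ r w
  have hw : 0 ≤ w ⬝ᵥ w := by simpa using dotProduct_self_star_nonneg w
  rw [hrw, ← hww]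
  nlinarith

theorem fmap_add_smul {n m : ℕ} (A : Matrix (Fin m) (Fin n) ℝ) (b : Fin m → ℝ) (c : Fin n → ℝ)
    (x u : Fin n → ℝ) (z v : Fin m → ℝ) (s : ℝ) :
    fmap A b c (x + s • u) (z + s • v)
      = fmap A b c x z - s • (Aᵀ *ᵥ v + u + (Aᵀ * A) *ᵥ u) := by
  simp only [fmap, mulVec_add, mulVec_sub, mulVec_smul, ← mulVec_mulVec]
  module

theorem fmap_add_smul_apply_of_apply_eq_zero {n m : ℕ} (A : Matrix (Fin m) (Fin n) ℝ)
    (b : Fin m → ℝ) (c : Fin n → ℝ) (x : Fin n → ℝ) (z v : Fin m → ℝ) {u : Fin n → ℝ} {i : Fin n}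
    (hu : u i = 0) (s : ℝ) :
    fmap A b c (x + s • u) (z + s • v) i
      = fmap A b c x z i - s * ((Aᵀ *ᵥ v) i + ((Aᵀ * A) *ᵥ u) i) := by
  rw [fmap_add_smul]
  simp only [Pi.sub_apply, Pi.add_apply, Pi.smul_apply, smul_eq_mul, hu]
  ring

theorem mode_mismatch_bound_general (n m : ℕ) (c : Fin n → ℝ) (b : Fin m → ℝ)
    (A : Matrix (Fin m) (Fin n) ℝ)
    (hρ : spectralRadius ℝ (Aᵀ * A) ≤ 1)
    (xh : Fin n → ℝ) (zh : Fin m → ℝ)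
    (i : Fin n) (hi : i ∉ sgm A b c xh zh)
    (T : ℝ)
    (hfT : fmap A b c
        (xh + T • (ISet (sgm A b c xh zh) *ᵥ fmap A b c xh zh))
        (zh + T • (A *ᵥ xh - b)) i = 0) :
    ∀ ν : ℝ, 0 < ν → ∀ t : ℝ, T ≤ t → t - T < ν / (2 * Real.sqrt 2) →
      (fmap A b c
          (xh + t • (ISet (sgm A b c xh zh) *ᵥ fmap A b c xh zh))
          (zh + t • (A *ᵥ xh - b)) i) ^ 2
        ≤ ν ^ 2 *
          (fmap A b c xh zh ⬝ᵥ (ISet (sgm A b c xh zh ∩ Nx A i) *ᵥ fmap A b c xh zh)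
            + (A *ᵥ xh - b) ⬝ᵥ (ISet (Nz A i) *ᵥ (A *ᵥ xh - b))) := by
  intro ν _ t hTt htν
  have hA : ‖A‖ ≤ 1 := A.l2_opNorm_le_one_of_spectralRadius_transpose_mul_self_le_one hρ
  have hM : ‖(Aᵀ * A)ᵀ‖ ≤ 1 := by
    rw [transpose_mul, transpose_transpose, ← conjTranspose_eq_transpose_of_trivial,
      l2_opNorm_conjTranspose_mul_self]
    exact mul_le_one₀ hA (norm_nonneg A) hA
  set p := sgm A b c xh zh
  set f := fmap A b c xh zh
  set u := ISet p *ᵥ f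
  set w := A *ᵥ xh - b
  set M := Aᵀ * A
  set d := (Aᵀ *ᵥ w) i + (M *ᵥ u) i
  have hflow (s : ℝ) : fmap A b c (xh + s • u) (zh + s • w) i = f i - s * d :=
    fmap_add_smul_apply_of_apply_eq_zero A b c xh zh w (by simp [u, ISet_mulVec_apply, hi]) s
  have hft : fmap A b c (xh + t • u) (zh + t • w) i = (T - t) * d := by
    rw [hflow, (by linarith [hflow T] : f i = T * d)]
    ring
  have hw : ((Aᵀ *ᵥ w) i) ^ 2 ≤ w ⬝ᵥ (ISet (Nz A i) *ᵥ w) :=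
    sq_dotProduct_le_dotProduct_ISet_mulVec (fun j hj => by simpa [Nz] using hj)
      ((A.dotProduct_col_self_le_l2_opNorm_sq i).trans (pow_le_one₀ (norm_nonneg A) hA)) w
  have hu : ((M *ᵥ u) i) ^ 2 ≤ f ⬝ᵥ (ISet (p ∩ Nx A i) *ᵥ f) := by
    rw [← ISet_mulVec_dotProduct_ISet_mulVec_ISet_mulVec]
    exact sq_dotProduct_le_dotProduct_ISet_mulVec (r := Mᵀ.col i)
      (fun j hj => by
        simp only [Nx, Set.mem_union, Set.mem_ofPred_eq, not_or, not_not] at hj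
        exact hj.1)
      ((Mᵀ.dotProduct_col_self_le_l2_opNorm_sq i).trans (pow_le_one₀ (norm_nonneg _) hM)) u
  have htT : (t - T) ^ 2 ≤ ν ^ 2 / 8 := by
    have h8 : ν ^ 2 / 8 = (ν / (2 * Real.sqrt 2)) ^ 2 := by
      rw [div_pow, mul_pow, Real.sq_sqrt zero_le_two]; norm_num
    rw [h8]
    gcongr
  have hd : d ^ 2 ≤ 2 * (f ⬝ᵥ (ISet (p ∩ Nx A i) *ᵥ f) + w ⬝ᵥ (ISet (Nz A i) *ᵥ w)) := by
    nlinarith [sq_nonneg ((Aᵀ *ᵥ w) i - (M *ᵥ u) i)]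
  rw [hft]
  nlinarith [sq_nonneg d, sq_nonneg ν]

/-- Bound on the growth of f_i along the sample-and-hold flow under a mode
mismatch.  With p̂ = σ(x̂,ẑ), i ∉ p̂, x(t) = x̂ + t·I_{p̂}f(x̂,ẑ), z(t) = ẑ + t·(Ax̂−b),
and T > 0 with f_i(x(T),z(T)) = 0, for every ν > 0 and t ≥ T with t − T < ν/(2√2):
f_i(x(t),z(t))² ≤ ν²( f̂ᵀI_{p̂∩N_i^x}f̂ + (Ax̂−b)ᵀI_{N_i^z}(Ax̂−b) ). -/
theorem mode_mismatch_bound (n m : ℕ) (c : Fin n → ℝ) (b : Fin m → ℝ)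
    (A : Matrix (Fin m) (Fin n) ℝ)
    (hρ : spectralRadius ℝ (Aᵀ * A) ≤ 1)
    (xh : Fin n → ℝ) (zh : Fin m → ℝ)
    (hxh : ∀ i, 0 ≤ xh i)
    (i : Fin n) (hi : i ∉ sgm A b c xh zh)
    (T : ℝ) (hT : 0 < T)
    (hfT : fmap A b c
        (xh + T • (ISet (sgm A b c xh zh) *ᵥ fmap A b c xh zh))
        (zh + T • (A *ᵥ xh - b)) i = 0) :
    ∀ ν : ℝ, 0 < ν → ∀ t : ℝ, T ≤ t → t - T < ν / (2 * Real.sqrt 2) →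
      (fmap A b c
          (xh + t • (ISet (sgm A b c xh zh) *ᵥ fmap A b c xh zh))
          (zh + t • (A *ᵥ xh - b)) i) ^ 2
        ≤ ν ^ 2 *
          (fmap A b c xh zh ⬝ᵥ (ISet (sgm A b c xh zh ∩ Nx A i) *ᵥ fmap A b c xh zh)
            + (A *ᵥ xh - b) ⬝ᵥ (ISet (Nz A i) *ᵥ (A *ᵥ xh - b))) :=
  mode_mismatch_bound_general n m c b A hρ xh zh i hi T hfT
end
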